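/- arXiv:2009.05075 — 2 statements merged into one kernel-verified Lean document; each statement's English description precedes it below -/
import Mathlib

section
/- Let φ, ψ : ℝ → ℝ be real-valued integrable functions such that |φ̂(ω)|² + Σ_{j=0}^{∞} |ψ̂(2^{−j} ω)|² = 1 for almost every ω ∈ ℝ. Fix an integer J and write F_J(t) = |φ̂(2^{−J} t)|² and G_j(t) = |ψ̂(2^{−j} t)|². Then for almost every ξ ∈ ℝ²: (1/(2π)) ∫₀^{2π} [ F_J(⟨ξ,u_θ⟩) F_J(⟨ξ,v_θ⟩) + 2 Σ_{j=J}^{∞} F_J(⟨ξ,u_θ⟩) G_j(⟨ξ,v_θ⟩) + Σ_{j=J}^{∞} Σ_{k=J}^{∞} G_j(⟨ξ,u_θ⟩) G_k(⟨ξ,v_θ⟩) ] dθ = 1, where the 'horizontal' and 'vertical' mixed terms have been combined into a single sum with factor 2 using the angular symmetry θ ↦ θ + π/2 and the evenness of F_J and G_j (which holds since φ and ψ are real-valued). -/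
/-!
Rescaling the hypothesis by `2^{-J}` gives `F_J + ∑ₙ G_{J+n} = 1` almost everywhere on `ℝ`.
Since `ξ ↦ ⟪ξ, w⟫` is a surjective linear map for `w ≠ 0`, Fubini shows that for almost every
`ξ` this identity holds at `⟪ξ, u_θ⟫` and at `⟪ξ, v_θ⟫` for almost every `θ`. There the
integrand collapses to `1 + F_J ⟪ξ, u_θ⟫ - F_J ⟪ξ, u_{θ+π/2}⟫`, and the last two terms cancel
after integrating over a period.
-/

open MeasureTheory Real RealInnerProductSpace

/-- The unit vector u_θ = (cos θ, sin θ) in ℝ². -/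
noncomputable def uVec (θ : ℝ) : EuclideanSpace ℝ (Fin 2) :=
  (WithLp.equiv 2 (Fin 2 → ℝ)).symm ![Real.cos θ, Real.sin θ]

/-- The unit vector v_θ = u_{θ+π/2} = (−sin θ, cos θ) in ℝ². -/
noncomputable def vVec (θ : ℝ) : EuclideanSpace ℝ (Fin 2) :=
  (WithLp.equiv 2 (Fin 2 → ℝ)).symm ![-Real.sin θ, Real.cos θ]

/-- The radialization η²(x) = (1/(2π)) ∫₀^{2π} η(⟨x,u_θ⟩) η(⟨x,v_θ⟩) dθ. -/
noncomputable def radialization (η : ℝ → ℝ) (x : EuclideanSpace ℝ (Fin 2)) : ℝ :=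
  (1 / (2 * π)) * ∫ θ in (0:ℝ)..(2 * π), η ⟪x, uVec θ⟫ * η ⟪x, vVec θ⟫

open FourierTransform

/-- F_J(t) = |φ̂(2^{−J} t)|². -/
noncomputable def FJ (φ : ℝ → ℝ) (J : ℤ) (t : ℝ) : ℝ :=
  ‖𝓕 (fun x : ℝ => (φ x : ℂ)) ((2:ℝ) ^ (-J) * t)‖ ^ 2

/-- G_j(t) = |ψ̂(2^{−j} t)|². -/
noncomputable def Gj (ψ : ℝ → ℝ) (j : ℤ) (t : ℝ) : ℝ :=
  ‖𝓕 (fun x : ℝ => (ψ x : ℂ)) ((2:ℝ) ^ (-j) * t)‖ ^ 2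

lemma inner_uVec (ξ : EuclideanSpace ℝ (Fin 2)) (θ : ℝ) :
    ⟪ξ, uVec θ⟫ = ξ 0 * Real.cos θ + ξ 1 * Real.sin θ := by
  simp [uVec, PiLp.inner_apply, Fin.sum_univ_two, RCLike.inner_apply, mul_comm]

lemma uVec_add_pi_div_two (θ : ℝ) : uVec (θ + π / 2) = vVec θ := by
  unfold uVec vVec
  congr 1
  ext i
  fin_cases i <;> simp [Real.cos_add, Real.sin_add]

lemma continuous_uVec : Continuous uVec :=
  (PiLp.continuous_toLp 2 _).comp (by fun_prop)

lemma uVec_ne_zero (θ : ℝ) : uVec θ ≠ 0 := by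
  intro h
  have h0 := congrArg (· 0) h
  have h1 := congrArg (· 1) h
  simp [uVec] at h0 h1
  nlinarith [Real.cos_sq_add_sin_sq θ]

lemma continuous_vVec : Continuous vVec := by
  simp_rw [← funext uVec_add_pi_div_two]
  exact continuous_uVec.comp (continuous_add_const (π / 2))

lemma vVec_ne_zero (θ : ℝ) : vVec θ ≠ 0 :=
  uVec_add_pi_div_two θ ▸ uVec_ne_zero _

lemma continuous_FJ {φ : ℝ → ℝ} (hφ : Integrable φ volume) (J : ℤ) : Continuous (FJ φ J) := by
  have hFT : Continuous (𝓕 (fun x : ℝ => (φ x : ℂ))) :=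
    VectorFourier.fourierIntegral_continuous Real.continuous_fourierChar continuous_inner hφ.ofReal
  exact (hFT.comp (continuous_const.mul continuous_id)).norm.pow 2

lemma FJ_eq_FJ_zero (φ : ℝ → ℝ) (J : ℤ) (t : ℝ) : FJ φ J t = FJ φ 0 ((2:ℝ) ^ (-J) * t) := by
  simp [FJ]

lemma Gj_add_natCast (ψ : ℝ → ℝ) (J : ℤ) (n : ℕ) (t : ℝ) :
    Gj ψ (J + n) t = Gj ψ n ((2:ℝ) ^ (-J) * t) := by
  simp only [Gj, neg_add, zpow_add₀ (two_ne_zero' ℝ), mul_assoc, mul_comm ((2:ℝ) ^ (-J))]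

lemma ae_FJ_add_tsum_Gj_eq_one {φ ψ : ℝ → ℝ}
    (h : ∀ᵐ ω : ℝ, FJ φ 0 ω + ∑' j : ℕ, Gj ψ j ω = 1) (J : ℤ) :
    ∀ᵐ t : ℝ, FJ φ J t + ∑' n : ℕ, Gj ψ (J + n) t = 1 := by
  have hc : (2:ℝ) ^ (-J) ≠ 0 := zpow_ne_zero _ two_ne_zero
  filter_upwards [(Measure.quasiMeasurePreserving_smul volume hc).ae h] with t ht
  simpa only [FJ_eq_FJ_zero φ J, Gj_add_natCast ψ J, smul_eq_mul] using ht

lemma surjective_inner_left_of_ne_zero {E : Type*} [NormedAddCommGroup E] [InnerProductSpace ℝ E]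
    {w : E} (hw : w ≠ 0) : Function.Surjective fun ξ : E => ⟪ξ, w⟫ := by
  intro t
  refine ⟨(t / ⟪w, w⟫) • w, ?_⟩
  have : ⟪w, w⟫ ≠ 0 := inner_self_ne_zero.mpr hw
  simp only [inner_smul_left, RCLike.conj_to_real]
  field_simp

lemma ae_ae_inner_of_ae {α E : Type*} [MeasurableSpace α] [NormedAddCommGroup E]
    [InnerProductSpace ℝ E] [FiniteDimensional ℝ E] [MeasurableSpace E] [BorelSpace E]
    {μ : Measure E} [μ.IsAddHaarMeasure] {ν : Measure α} [SFinite ν]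
    {p : ℝ → Prop} (hp : ∀ᵐ t, p t) {w : α → E} (hw : Measurable w) (hw0 : ∀ θ, w θ ≠ 0) :
    ∀ᵐ ξ ∂μ, ∀ᵐ θ ∂ν, p ⟪ξ, w θ⟫ := by
  obtain ⟨s, hs_ae, hs, hsp⟩ := hp.exists_measurable_mem
  suffices ∀ᵐ ξ ∂μ, ∀ᵐ θ ∂ν, ⟪ξ, w θ⟫ ∈ s from this.mono fun ξ hξ => hξ.mono fun θ => hsp _
  refine (Measure.ae_ae_comm ?_).mp (Filter.Eventually.of_forall fun θ => ?_)
  · exact hs.preimage (measurable_snd.inner (hw.comp measurable_fst))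
  · exact (ae_comp_linearMap_mem_iff ((innerₗ E).flip (w θ)) μ volume
      (surjective_inner_left_of_ne_zero (hw0 θ)) hs).mpr hs_ae

lemma Function.Periodic.intervalIntegral_comp_add_right {g : ℝ → ℝ} {T : ℝ}
    (hg : Function.Periodic g T) (s : ℝ) :
    ∫ θ in (0:ℝ)..T, g (θ + s) = ∫ θ in (0:ℝ)..T, g θ := by
  rw [intervalIntegral.integral_comp_add_right, zero_add, add_comm T,
    hg.intervalIntegral_add_eq s 0, zero_add]

lemma Function.Periodic.intervalIntegral_one_add_sub_comp_add_right {g : ℝ → ℝ} {T : ℝ}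
    (hg : Function.Periodic g T) (hg_cont : Continuous g) (s : ℝ) :
    ∫ θ in (0:ℝ)..T, (1 + g θ - g (θ + s)) = T := by
  have h_one_add : IntervalIntegrable (fun θ => 1 + g θ) volume 0 T :=
    (continuous_const.add hg_cont).intervalIntegrable _ _
  have h_shift : IntervalIntegrable (fun θ => g (θ + s)) volume 0 T :=
    (hg_cont.comp (continuous_add_const s)).intervalIntegrable _ _
  rw [intervalIntegral.integral_sub h_one_add h_shift,
    intervalIntegral.integral_add intervalIntegrable_const (hg_cont.intervalIntegrable _ _),
    hg.intervalIntegral_comp_add_right]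
  simp

lemma mul_add_two_mul_tsum_add_tsum_tsum_eq {a b : ℝ} {s t : ℕ → ℝ}
    (ha : a + ∑' n, s n = 1) (hb : b + ∑' n, t n = 1) :
    a * b + 2 * (∑' n, a * t n) + ∑' n, ∑' m, s n * t m = 1 + a - b := by
  rw [tsum_mul_left, tsum_congr fun n => tsum_mul_left, tsum_mul_right]
  linear_combination (∑' n, t n) * ha + (a + 1) * hb

theorem product_partition_angular_average_general (φ ψ : ℝ → ℝ)
    (hφ : Integrable φ volume)
    (hMRA : ∀ᵐ ω : ℝ, Summable (fun j : ℕ => Gj ψ (j:ℤ) ω) ∧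
      FJ φ 0 ω + ∑' j : ℕ, Gj ψ (j:ℤ) ω = 1) (J : ℤ) :
    ∀ᵐ ξ : EuclideanSpace ℝ (Fin 2),
      (1 / (2 * π)) * ∫ θ in (0:ℝ)..(2 * π),
        (FJ φ J ⟪ξ, uVec θ⟫ * FJ φ J ⟪ξ, vVec θ⟫
          + 2 * (∑' n : ℕ, FJ φ J ⟪ξ, uVec θ⟫ * Gj ψ (J + n) ⟪ξ, vVec θ⟫)
          + (∑' n : ℕ, ∑' m : ℕ,
              Gj ψ (J + n) ⟪ξ, uVec θ⟫ * Gj ψ (J + m) ⟪ξ, vVec θ⟫)) = 1 := by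
  have hpart := ae_FJ_add_tsum_Gj_eq_one (hMRA.mono fun _ h => h.2) J
  filter_upwards [ae_ae_inner_of_ae (ν := volume) hpart continuous_uVec.measurable uVec_ne_zero,
    ae_ae_inner_of_ae (ν := volume) hpart continuous_vVec.measurable vVec_ne_zero] with ξ hu hv
  set g := fun θ => FJ φ J ⟪ξ, uVec θ⟫
  have hg_cont : Continuous g :=
    (continuous_FJ hφ J).comp (continuous_const.inner continuous_uVec)
  have hg_per : Function.Periodic g (2 * π) := fun θ => by
    simp only [g, inner_uVec, cos_add_two_pi, sin_add_two_pi]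
  have hintegrand : ∀ᵐ θ : ℝ, θ ∈ Set.uIoc 0 (2 * π) →
      FJ φ J ⟪ξ, uVec θ⟫ * FJ φ J ⟪ξ, vVec θ⟫
        + 2 * (∑' n : ℕ, FJ φ J ⟪ξ, uVec θ⟫ * Gj ψ (J + n) ⟪ξ, vVec θ⟫)
        + (∑' n : ℕ, ∑' m : ℕ, Gj ψ (J + n) ⟪ξ, uVec θ⟫ * Gj ψ (J + m) ⟪ξ, vVec θ⟫)
      = 1 + g θ - g (θ + π / 2) := by
    filter_upwards [hu, hv] with θ hθu hθv _
    rw [← uVec_add_pi_div_two] at hθv ⊢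
    exact mul_add_two_mul_tsum_add_tsum_tsum_eq hθu hθv
  rw [intervalIntegral.integral_congr_ae hintegrand,
    hg_per.intervalIntegral_one_add_sub_comp_add_right hg_cont]
  field_simp

/-- for real-valued integrable φ, ψ with
|φ̂(ω)|² + Σ_{j=0}^∞ |ψ̂(2^{−j}ω)|² = 1 a.e. and any integer J, for a.e. ξ ∈ ℝ² the
angularly averaged product expansion, with the two mixed terms combined into a single sum
with factor 2, equals 1. -/
theorem product_partition_angular_average (φ ψ : ℝ → ℝ)
    (hφ : Integrable φ volume) (hψ : Integrable ψ volume)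
    (hMRA : ∀ᵐ ω : ℝ, Summable (fun j : ℕ => Gj ψ (j:ℤ) ω) ∧
      FJ φ 0 ω + ∑' j : ℕ, Gj ψ (j:ℤ) ω = 1) (J : ℤ) :
    ∀ᵐ ξ : EuclideanSpace ℝ (Fin 2),
      (1 / (2 * π)) * ∫ θ in (0:ℝ)..(2 * π),
        (FJ φ J ⟪ξ, uVec θ⟫ * FJ φ J ⟪ξ, vVec θ⟫
          + 2 * (∑' n : ℕ, FJ φ J ⟪ξ, uVec θ⟫ * Gj ψ (J + n) ⟪ξ, vVec θ⟫)
          + (∑' n : ℕ, ∑' m : ℕ,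
              Gj ψ (J + n) ⟪ξ, uVec θ⟫ * Gj ψ (J + m) ⟪ξ, vVec θ⟫)) = 1 :=
  product_partition_angular_average_general φ ψ hφ hMRA J
end

section
/- Backprojection inversion formula: let f : ℝ² → ℂ be a Schwartz function. For θ ∈ ℝ define R_θ f(t) = ∫_ℝ f(t·u_θ + s·v_θ) ds. Then for every x ∈ ℝ², f(x) = ∫₀^{π} ∫_ℝ (R_θ f)^(t) · |t| · e^{2πi t ⟨x, u_θ⟩} dt dθ, where (R_θ f)^ denotes the one-dimensional Fourier transform of R_θ f. -/
/-!
Fourier inversion writes `f x` as the integral of `𝓕 f ω * e^{2πi⟪ω, x⟫}` over the plane.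
Parametrising the plane by lines through the origin, `ω = t • u_θ` with `θ ∈ (0, π)` and
`t ∈ ℝ`, has Jacobian `|t|`, and by the Fourier slice theorem `𝓕 f (t • u_θ)` is the
one-dimensional Fourier transform of `R_θ f` at `t`; the slice theorem itself is Fubini in the
orthonormal frame `u_θ, v_θ`.
-/

open MeasureTheory Real RealInnerProductSpace

open FourierTransform

/-- The Radon projection R_θ f(t) = ∫ f(t u_θ + s v_θ) ds. -/
noncomputable def radon (f : EuclideanSpace ℝ (Fin 2) → ℂ) (θ : ℝ) (t : ℝ) : ℂ :=
  ∫ s : ℝ, f (t • uVec θ + s • vVec θ)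

section Frame

variable (θ : ℝ)

lemma norm_uVec : ‖uVec θ‖ = 1 := by
  simp [uVec, EuclideanSpace.norm_eq, Fin.sum_univ_two]

lemma norm_vVec : ‖vVec θ‖ = 1 := by
  simp [vVec, EuclideanSpace.norm_eq, Fin.sum_univ_two]

lemma inner_uVec_vVec : ⟪uVec θ, vVec θ⟫ = 0 := by
  simp [uVec, vVec, PiLp.inner_apply, Fin.sum_univ_two]
  ring

lemma orthonormal_uVec_vVec : Orthonormal ℝ ![uVec θ, vVec θ] := by
  refine ⟨fun i => ?_, fun i j hij => ?_⟩
  · fin_cases i <;> simp [norm_uVec, norm_vVec]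
  · fin_cases i <;> fin_cases j <;> simp_all [inner_uVec_vVec, real_inner_comm (uVec θ)]

noncomputable def rotBasis : OrthonormalBasis (Fin 2) ℝ (EuclideanSpace ℝ (Fin 2)) :=
  (basisOfOrthonormalOfCardEqFinrank (orthonormal_uVec_vVec θ) (by simp)).toOrthonormalBasis
    (by simpa using orthonormal_uVec_vVec θ)

lemma coe_rotBasis : ⇑(rotBasis θ) = ![uVec θ, vVec θ] := by
  simp [rotBasis]

noncomputable def rotCoord : (ℝ × ℝ) ≃ᵐ EuclideanSpace ℝ (Fin 2) :=
  MeasurableEquiv.finTwoArrow.symm.trans <|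
    (MeasurableEquiv.toLp 2 (Fin 2 → ℝ)).trans
      (rotBasis θ).repr.toHomeomorph.toMeasurableEquiv.symm

lemma rotCoord_apply (p : ℝ × ℝ) : rotCoord θ p = p.1 • uVec θ + p.2 • vVec θ := by
  change (rotBasis θ).repr.symm (WithLp.toLp 2 ![p.1, p.2]) = _
  simp [← (rotBasis θ).sum_repr_symm, coe_rotBasis, Fin.sum_univ_two]

lemma measurePreserving_rotCoord : MeasurePreserving (rotCoord θ) :=
  (rotBasis θ).measurePreserving_repr_symm.comp <|
    ((EuclideanSpace.volume_preserving_symm_measurableEquiv_toLp (Fin 2)).symm _).comp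
      ((volume_preserving_finTwoArrow ℝ).symm _)

lemma integral_comp_rotCoord {G : Type*} [NormedAddCommGroup G] [NormedSpace ℝ G]
    (F : EuclideanSpace ℝ (Fin 2) → G) :
    ∫ p : ℝ × ℝ, F (p.1 • uVec θ + p.2 • vVec θ) = ∫ y, F y := by
  simp_rw [← rotCoord_apply, (measurePreserving_rotCoord θ).integral_comp']

lemma MeasureTheory.Integrable.comp_rotCoord {G : Type*} [NormedAddCommGroup G]
    {F : EuclideanSpace ℝ (Fin 2) → G} (hF : Integrable F) :
    Integrable fun p : ℝ × ℝ => F (p.1 • uVec θ + p.2 • vVec θ) := by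
  simp_rw [← rotCoord_apply]
  exact (measurePreserving_rotCoord θ).integrable_comp_emb (rotCoord θ).measurableEmbedding |>.2 hF

end Frame

lemma inner_smul_uVec_add_smul_vVec_smul_uVec (θ a b t : ℝ) :
    ⟪a • uVec θ + b • vVec θ, t • uVec θ⟫ = ⟪a, t⟫ := by
  simp [inner_add_left, real_inner_smul_right, inner_uVec_vVec, real_inner_comm (uVec θ), norm_uVec]

theorem fourier_radon {f : EuclideanSpace ℝ (Fin 2) → ℂ} (hf : Integrable f) (θ t : ℝ) :
    𝓕 (radon f θ) t = 𝓕 f (t • uVec θ) := by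
  set g : EuclideanSpace ℝ (Fin 2) → ℂ := fun y => 𝐞 (-⟪y, t • uVec θ⟫) • f y
  have hg : Integrable g := (Real.fourierIntegral_convergent_iff _).2 hf
  calc 𝓕 (radon f θ) t
      = ∫ a : ℝ, ∫ b : ℝ, g (a • uVec θ + b • vVec θ) := by
        simp only [Real.fourier_eq, radon, g, inner_smul_uVec_add_smul_vVec_smul_uVec,
          Circle.smul_def, integral_smul]
    _ = ∫ y, g y := by
        rw [← integral_comp_rotCoord θ g, ← integral_prod _ (hg.comp_rotCoord θ)]
        rfl

section PolarLines

open Set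

lemma subset_image_polarCoord_symm :
    {q : ℝ × ℝ | q.2 ≠ 0} ⊆ polarCoord.symm '' (({0}ᶜ : Set ℝ) ×ˢ Ioo 0 π) := by
  intro q hq
  have hq_source : q ∈ polarCoord.source := Or.inr hq
  obtain ⟨⟨r, θ⟩, ⟨hr, hθ⟩, hq_eq⟩ : ∃ p ∈ polarCoord.target, polarCoord.symm p = q :=
    ⟨polarCoord q, polarCoord.map_source hq_source, polarCoord.left_inv hq_source⟩
  have hθ0 : θ ≠ 0 := by
    rintro rfl
    exact hq (by simp [← hq_eq])
  rcases hθ0.lt_or_gt with hneg | hpos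
  · refine ⟨(-r, θ + π), ⟨neg_ne_zero.2 (ne_of_gt hr), ?_, ?_⟩, ?_⟩
    · linarith [hθ.1]
    · linarith
    · simp [← hq_eq, cos_add_pi, sin_add_pi]
  · exact ⟨(r, θ), ⟨ne_of_gt hr, hpos, hθ.2⟩, hq_eq⟩

lemma injOn_polarCoord_symm : InjOn polarCoord.symm (({0}ᶜ : Set ℝ) ×ˢ Ioo 0 π) := by
  rintro ⟨t₁, θ₁⟩ ⟨ht₁, hθ₁⟩ ⟨t₂, θ₂⟩ ⟨ht₂, hθ₂⟩ h
  simp only [polarCoord_symm_apply, Prod.mk.injEq] at h ht₁ ht₂ hθ₁ hθ₂ ⊢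
  obtain ⟨hc, hs⟩ := h
  have hsin₁ := sin_pos_of_pos_of_lt_pi hθ₁.1 hθ₁.2
  have hsin₂ := sin_pos_of_pos_of_lt_pi hθ₂.1 hθ₂.2
  have hsq : t₁ ^ 2 = t₂ ^ 2 := by
    linear_combination (t₁ * cos θ₁ + t₂ * cos θ₂) * hc + (t₁ * sin θ₁ + t₂ * sin θ₂) * hs
      - t₁ ^ 2 * cos_sq_add_sin_sq θ₁ + t₂ ^ 2 * cos_sq_add_sin_sq θ₂
  have ht : t₁ = t₂ := by
    rcases sq_eq_sq_iff_eq_or_eq_neg.1 hsq with h | rfl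
    · exact h
    · have : t₂ * (sin θ₁ + sin θ₂) = 0 := by linear_combination -hs
      simp_all [ne_of_gt (add_pos hsin₁ hsin₂)]
  subst ht
  exact ⟨rfl, injOn_cos ⟨hθ₁.1.le, hθ₁.2.le⟩ ⟨hθ₂.1.le, hθ₂.2.le⟩ (mul_left_cancel₀ ht₁ hc)⟩

lemma ae_eq_univ_image_polarCoord_symm :
    polarCoord.symm '' (({0}ᶜ : Set ℝ) ×ˢ Ioo 0 π) =ᵐ[volume] univ := by
  refine ae_eq_univ.2 (measure_mono_null (t := univ ×ˢ {0}) ?_ ?_)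
  · intro q hq
    by_contra hq0
    exact hq (subset_image_polarCoord_symm (by simpa using hq0))
  · simp [Measure.volume_eq_prod]

theorem integral_real_prod_eq_integral_lines {G : Type*} [NormedAddCommGroup G] [NormedSpace ℝ G]
    {H : ℝ × ℝ → G} (hH : Integrable H) :
    ∫ q, H q = ∫ θ in 0..π, ∫ t, |t| • H (t * cos θ, t * sin θ) := by
  set S : Set (ℝ × ℝ) := ({0}ᶜ : Set ℝ) ×ˢ Ioo 0 π
  have hS : MeasurableSet S := (measurableSet_singleton 0).compl.prod measurableSet_Ioo
  have hSt : MeasurableSet (univ ×ˢ Ioo 0 π : Set (ℝ × ℝ)) :=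
    MeasurableSet.univ.prod measurableSet_Ioo
  have hderiv (p) (_ : p ∈ S) :
      HasFDerivWithinAt polarCoord.symm (fderivPolarCoordSymm p) S p :=
    (hasFDerivAt_polarCoord_symm p).hasFDerivWithinAt
  set F : ℝ × ℝ → G := fun p => |p.1| • H (polarCoord.symm p)
  -- The Jacobian factor `|t|` kills the line `t = 0`, on which `polarCoord.symm` is not injective.
  have hF_zero : ∀ p ∈ univ ×ˢ Ioo 0 π \ S, F p = 0 := by
    rintro ⟨t, θ⟩ ⟨⟨-, hθ⟩, hp⟩
    simp_all [S, F]
  have hF : IntegrableOn F (univ ×ˢ Ioo 0 π) := by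
    refine IntegrableOn.of_forall_sdiff_eq_zero ?_ hSt hF_zero
    have := (integrableOn_image_iff_integrableOn_abs_det_fderiv_smul volume hS hderiv
      injOn_polarCoord_symm H).1 hH.integrableOn
    simpa only [det_fderivPolarCoordSymm] using this
  calc ∫ q, H q = ∫ q in polarCoord.symm '' S, H q := by
        rw [setIntegral_congr_set ae_eq_univ_image_polarCoord_symm, setIntegral_univ]
    _ = ∫ p in S, F p := by
        rw [integral_image_eq_integral_abs_det_fderiv_smul volume hS hderiv injOn_polarCoord_symm]
        simp_rw [det_fderivPolarCoordSymm, F]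
    _ = ∫ p in univ ×ˢ Ioo 0 π, F p :=
        (setIntegral_eq_of_subset_of_forall_sdiff_eq_zero hSt
          (prod_mono (subset_univ _) subset_rfl) hF_zero).symm
    _ = ∫ θ in Ioo 0 π, ∫ t, F (t, θ) := by
        rw [IntegrableOn, Measure.volume_eq_prod, ← Measure.prod_restrict] at hF
        rw [Measure.volume_eq_prod, ← Measure.prod_restrict]
        simpa using integral_prod_symm F hF
    _ = ∫ θ in 0..π, ∫ t, |t| • H (t * cos θ, t * sin θ) := by
        rw [intervalIntegral.integral_of_le pi_pos.le, integral_Ioc_eq_integral_Ioo]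
        simp [F]

end PolarLines

theorem integral_eq_integral_lines {G : Type*} [NormedAddCommGroup G] [NormedSpace ℝ G]
    {F : EuclideanSpace ℝ (Fin 2) → G} (hF : Integrable F) :
    ∫ y, F y = ∫ θ in 0..π, ∫ t : ℝ, |t| • F (t • uVec θ) := by
  have hline (θ t : ℝ) :
      (t * cos θ) • uVec 0 + (t * sin θ) • vVec 0 = (t • uVec θ : EuclideanSpace ℝ (Fin 2)) := by
    ext i
    fin_cases i <;> simp [uVec, vVec]
  rw [← integral_comp_rotCoord 0, integral_real_prod_eq_integral_lines (hF.comp_rotCoord 0)]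
  simp only [hline]

/-- backprojection inversion formula: for a Schwartz function f on ℝ² and
every x ∈ ℝ², f(x) = ∫₀^π ∫_ℝ (R_θ f)^(t) |t| e^{2πit⟨x,u_θ⟩} dt dθ. -/
theorem backprojection_inversion (f : SchwartzMap (EuclideanSpace ℝ (Fin 2)) ℂ)
    (x : EuclideanSpace ℝ (Fin 2)) :
    f x = ∫ θ in (0:ℝ)..π, ∫ t : ℝ,
      𝓕 (radon (fun y => f y) θ) t * (|t| : ℝ) *
        Complex.exp (2 * (π : ℂ) * Complex.I * (t : ℂ) * ((⟪x, uVec θ⟫ : ℝ) : ℂ)) := by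
  have hinv : f x = 𝓕⁻ (𝓕 ⇑f) x := by
    rw [← SchwartzMap.fourier_coe, ← SchwartzMap.fourierInv_coe, FourierPair.fourierInv_fourier_eq]
  have hint : Integrable fun ω => 𝐞 ⟪ω, x⟫ • 𝓕 (⇑f) ω := by
    simpa using (Real.fourierIntegral_convergent_iff (-x)).2 (𝓕 f).integrable
  rw [hinv, Real.fourierInv_eq, integral_eq_integral_lines hint]
  refine intervalIntegral.integral_congr fun θ _ => integral_congr_ae (.of_forall fun t => ?_)
  simp only [fourier_radon f.integrable, real_inner_comm x, real_inner_smul_right, Circle.smul_def,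
    Real.fourierChar_apply, smul_eq_mul, Complex.real_smul]
  push_cast
  rw [show (2 * π * (t * ⟪x, uVec θ⟫) * Complex.I : ℂ) = 2 * π * Complex.I * t * ⟪x, uVec θ⟫ by
    ring]
  ring
end
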